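/- arXiv:2411.08829 — 2 statements merged into one kernel-verified Lean document; each statement's English description precedes it below -/
import Mathlib

section
/- Let N ≥ 2 and let Ω = ∏_{i=1}^N (a_i, b_i) be a bounded open box (rectangular domain) in ℝ^N. Let p_1, …, p_N be real constants with N < p_i < ∞ for every i, and set β_i = (1 − Σ_{j=1}^N 1/p_j) / (1 − Σ_{j=1}^N 1/p_j + N/p_i) for i = 1, …, N. Then there exists a constant C > 0 such that for every function u that is continuously differentiable on the closed box Ω̄ and all x, y ∈ Ω̄, one has |u(x) − u(y)| ≤ C · ( ‖u‖_{L^{p_M}(Ω)} + Σ_{i=1}^N ‖∂_{x_i} u‖_{L^{p_i}(Ω)} ) · Σ_{i=1}^N |x_i − y_i|^{β_i}, where p_M = max_{1≤i≤N} p_i. -/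
/-!
Fix a convex set `R ⊆ Ω` containing `x` whose extent in direction `i` is at most `r i`.
Writing `u z - u x` as the integral of `Du` along the segment from `x` to `z` and integrating over
`z ∈ R`, the order of integration can be swapped; for fixed `t ∈ (0, 1]` the homothety
`z ↦ x + t (z - x)` has Jacobian `t ^ N` and maps `R` into itself, so Hölder's inequality bounds the
inner integral of `|∂ᵢu|` by `t ^ (-N / pᵢ) ‖∂ᵢu‖_{pᵢ} |R| ^ (1 - 1 / pᵢ)`. Since `pᵢ > N`, the
factor `t ^ (-N / pᵢ)` is integrable on `(0, 1]`, and one gets the Morrey-type estimate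
`|u x - u y| ≲ ∑ rᵢ ‖∂ᵢu‖_{pᵢ} |R| ^ (-1 / pᵢ)` for `x, y ∈ R`.

For a box with sides `rᵢ = t ^ σᵢ`, where `σᵢ = s / N + 1 / pᵢ` and `s = 1 - ∑ 1 / pⱼ`, one has
`∑ σᵢ = 1`, so `|R| = t` and every term `rᵢ |R| ^ (-1 / pᵢ)` equals `t ^ (s / N)`. Taking the
smallest `t` with `|xᵢ - yᵢ| ≤ t ^ σᵢ` for all `i` gives `t ^ (s / N) ≤ ∑ |xᵢ - yᵢ| ^ βᵢ`, because
`βᵢ = (s / N) / σᵢ`. When that box does not fit into `Ω`, the whole of `Ω` is used instead.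
-/

open MeasureTheory Set AffineMap Module
open scoped ENNReal

theorem homothety_inv_leftInverse {E : Type*} [AddCommGroup E] [Module ℝ E] (x : E) {t : ℝ}
    (ht : t ≠ 0) : Function.LeftInverse (homothety x t⁻¹) (homothety x t) := fun z => by
  rw [← homothety_mul_apply, inv_mul_cancel₀ ht, homothety_one, id_apply]

theorem Convex.mapsTo_homothety {E : Type*} [AddCommGroup E] [Module ℝ E] {s : Set E}
    (hs : Convex ℝ s) {x : E} (hx : x ∈ s) {t : ℝ} (ht : t ∈ Icc (0 : ℝ) 1) :
    MapsTo (homothety x t) s s := fun z hz => by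
  rw [homothety_eq_lineMap]
  exact hs.lineMap_mem hx hz ht

section Homothety

variable {E : Type*} [NormedAddCommGroup E] [NormedSpace ℝ E] [MeasurableSpace E] [BorelSpace E]

theorem measurableEmbedding_homothety (x : E) {t : ℝ} (ht : t ≠ 0) :
    MeasurableEmbedding (homothety x t) := by
  have hsurj : Function.Surjective (homothety x t) := by
    simpa using (homothety_inv_leftInverse x (inv_ne_zero ht)).surjective
  refine .of_measurable_inverse (homothety_continuous x t).measurable ?_
    (homothety_continuous x t⁻¹).measurable (homothety_inv_leftInverse x ht)
  rw [hsurj.range_eq]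
  exact .univ

variable [FiniteDimensional ℝ E] (μ : Measure E) [μ.IsAddHaarMeasure]

theorem map_homothety_addHaar (x : E) {t : ℝ} (ht : t ≠ 0) :
    μ.map (homothety x t) = ENNReal.ofReal |t ^ finrank ℝ E|⁻¹ • μ := by
  ext s hs
  have hpre : homothety x t ⁻¹' s = homothety x t⁻¹ '' s := by
    refine (congrFun (image_eq_preimage_of_inverse ?_ (homothety_inv_leftInverse x ht)) s).symm
    simpa using homothety_inv_leftInverse x (inv_ne_zero ht)
  rw [Measure.map_apply (homothety_continuous x t).measurable hs, hpre,
    Measure.addHaar_image_homothety, inv_pow, abs_inv, Measure.smul_apply, smul_eq_mul]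

theorem eLpNorm_comp_homothety_le {F : Type*} [NormedAddCommGroup F] (g : E → F) (p : ℝ≥0∞)
    {R : Set E} (hR : MeasurableSet R) (x : E) {t : ℝ} (ht : t ≠ 0)
    (hmaps : MapsTo (homothety x t) R R) :
    eLpNorm (g ∘ homothety x t) p (μ.restrict R)
      ≤ ENNReal.ofReal |t ^ finrank ℝ E|⁻¹ ^ (1 / p).toReal * eLpNorm g p (μ.restrict R) := by
  have hmeas := (homothety_continuous x t).measurable
  have hmap : (μ.restrict R).map (homothety x t)
      ≤ ENNReal.ofReal |t ^ finrank ℝ E|⁻¹ • μ.restrict R :=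
    calc (μ.restrict R).map (homothety x t)
        ≤ (μ.restrict (homothety x t ⁻¹' R)).map (homothety x t) :=
          Measure.map_mono (Measure.restrict_mono hmaps.subset_preimage le_rfl) hmeas
      _ = _ := by
          rw [← Measure.restrict_map hmeas hR, map_homothety_addHaar μ x ht, Measure.restrict_smul]
  rw [← (measurableEmbedding_homothety x ht).eLpNorm_map_measure]
  exact (eLpNorm_mono_measure g hmap).trans (eLpNorm_smul_measure_le _ _ _ _)

theorem lintegral_enorm_comp_homothety_le {F : Type*} [NormedAddCommGroup F] {g : E → F}
    {p : ℝ} (hp : 1 ≤ p) {R : Set E} (hR : MeasurableSet R) (x : E) {t : ℝ} (ht : 0 < t)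
    (hmaps : MapsTo (homothety x t) R R)
    (hg : AEStronglyMeasurable (g ∘ homothety x t) (μ.restrict R)) :
    ∫⁻ z in R, ‖g (homothety x t z)‖ₑ ∂μ ≤ ENNReal.ofReal (t ^ (-(finrank ℝ E / p))) *
      eLpNorm g (ENNReal.ofReal p) (μ.restrict R) * μ R ^ (1 - 1 / p) := by
  have hscale : ENNReal.ofReal |t ^ finrank ℝ E|⁻¹ ^ (1 / ENNReal.ofReal p).toReal
      = ENNReal.ofReal (t ^ (-(finrank ℝ E / p))) := by
    rw [ENNReal.ofReal_rpow_of_nonneg (by positivity) (by positivity), abs_of_pos (by positivity),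
      ← Real.rpow_natCast, ← Real.rpow_neg ht.le, ← Real.rpow_mul ht.le, one_div,
      ENNReal.toReal_inv, ENNReal.toReal_ofReal (by linarith), neg_mul, div_eq_mul_inv]
  calc ∫⁻ z in R, ‖g (homothety x t z)‖ₑ ∂μ
      = eLpNorm (g ∘ homothety x t) 1 (μ.restrict R) := eLpNorm_one_eq_lintegral_enorm.symm
    _ ≤ eLpNorm (g ∘ homothety x t) (ENNReal.ofReal p) (μ.restrict R) * μ R ^ (1 - 1 / p) := by
        refine (eLpNorm_le_eLpNorm_mul_rpow_measure_univ (ENNReal.one_le_ofReal.2 hp)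
          hg).trans_eq ?_
        rw [Measure.restrict_apply_univ, ENNReal.toReal_one, ENNReal.toReal_ofReal (by linarith),
          div_one]
    _ ≤ _ := by
        rw [← hscale]
        gcongr
        exact eLpNorm_comp_homothety_le μ g _ hR x ht.ne' hmaps

end Homothety

theorem lintegral_Ioc_zero_one_ofReal_rpow {a : ℝ} (ha : -1 < a) :
    ∫⁻ t in Ioc (0 : ℝ) 1, ENNReal.ofReal (t ^ a) = ENNReal.ofReal (a + 1)⁻¹ := by
  have hint : IntegrableOn (fun t : ℝ => t ^ a) (Ioc 0 1) := by
    rw [← intervalIntegrable_iff_integrableOn_Ioc_of_le zero_le_one]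
    exact intervalIntegral.intervalIntegrable_rpow' ha
  rw [← ofReal_integral_eq_lintegral_ofReal hint
    ((ae_restrict_mem measurableSet_Ioc).mono fun t ht => Real.rpow_nonneg ht.1.le a),
    ← intervalIntegral.integral_of_le zero_le_one, integral_rpow (Or.inl ha),
    Real.zero_rpow (by linarith), Real.one_rpow, sub_zero, one_div]

theorem ContinuousOn.eLpNorm_restrict_ne_top {X E : Type*} [TopologicalSpace X] [T2Space X]
    [SecondCountableTopology X] [MeasurableSpace X] [OpensMeasurableSpace X]
    [NormedAddCommGroup E] {μ : Measure X} [IsFiniteMeasureOnCompacts μ] {K : Set X} {f : X → E}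
    (hK : IsCompact K) (hf : ContinuousOn f K) (p : ℝ≥0∞) : eLpNorm f p (μ.restrict K) ≠ ⊤ := by
  have : IsFiniteMeasure (μ.restrict K) := isFiniteMeasure_restrict.2 hK.measure_lt_top.ne
  obtain ⟨C, hC⟩ := hK.exists_bound_of_continuousOn hf
  exact (MemLp.of_bound (hf.aestronglyMeasurable hK.measurableSet) C
    ((ae_restrict_mem hK.measurableSet).mono hC)).eLpNorm_ne_top

theorem inv_one_sub_div_pos {n p : ℝ} (hn : 0 ≤ n) (hnp : n < p) : 0 < (1 - n / p)⁻¹ :=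
  inv_pos.2 (sub_pos.2 ((div_lt_one (hn.trans_lt hnp)).2 hnp))

theorem one_le_rpow_neg_mul_rpow_of_lt_rpow {d σ γ t : ℝ} (hd : 0 < d) (hσ : 0 < σ) (hγ : 0 ≤ γ)
    (ht : 0 < t) (hdt : d < t ^ σ) : 1 ≤ d ^ (-(γ / σ)) * t ^ γ := by
  rw [Real.rpow_neg hd.le, inv_mul_eq_div, one_le_div (Real.rpow_pos_of_pos hd _)]
  calc d ^ (γ / σ) ≤ (t ^ σ) ^ (γ / σ) := Real.rpow_le_rpow hd.le hdt.le (div_nonneg hγ hσ.le)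
    _ = t ^ γ := by rw [← Real.rpow_mul ht.le, mul_div_cancel₀ _ hσ.ne']

section Finite

variable {ι : Type*} [Fintype ι]

theorem sum_one_div_lt_one [Nonempty ι] {p : ι → ℝ} (hp : ∀ i, (Fintype.card ι : ℝ) < p i) :
    ∑ i, 1 / p i < 1 :=
  calc ∑ i, 1 / p i < ∑ _i : ι, 1 / (Fintype.card ι : ℝ) :=
        Finset.sum_lt_sum_of_nonempty Finset.univ_nonempty fun i _ =>
          one_div_lt_one_div_of_lt (Nat.cast_pos.2 Fintype.card_pos) (hp i)
    _ = 1 := by simp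

theorem Finset.sum_mul_le_sum_mul_sum {w A : ι → ℝ} (hw : ∀ i, 0 ≤ w i) (hA : ∀ i, 0 ≤ A i) :
    ∑ i, w i * A i ≤ (∑ i, w i) * ∑ i, A i := by
  rw [Finset.sum_mul]
  exact Finset.sum_le_sum fun i _ => mul_le_mul_of_nonneg_left
    (Finset.single_le_sum (fun j _ => hA j) (Finset.mem_univ i)) (hw i)

theorem exists_pos_le_rpow_and_rpow_le_sum {δ σ : ι → ℝ} (hδ : ∀ i, 0 ≤ δ i)
    (hσ : ∀ i, 0 < σ i) (γ : ℝ) {j : ι} (hj : 0 < δ j) :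
    ∃ t > 0, (∀ i, δ i ≤ t ^ σ i) ∧ t ^ γ ≤ ∑ i, δ i ^ (γ / σ i) := by
  have : Nonempty ι := ⟨j⟩
  obtain ⟨i₀, hi₀⟩ := Finite.exists_max fun i => δ i ^ (σ i)⁻¹
  refine ⟨δ i₀ ^ (σ i₀)⁻¹, (Real.rpow_pos_of_pos hj _).trans_le (hi₀ j), fun i => ?_, ?_⟩
  · calc δ i = (δ i ^ (σ i)⁻¹) ^ σ i := (Real.rpow_inv_rpow (hδ i) (hσ i).ne').symm
      _ ≤ _ := Real.rpow_le_rpow (Real.rpow_nonneg (hδ i) _) (hi₀ i) (hσ i).le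
  · rw [← Real.rpow_mul (hδ i₀), inv_mul_eq_div]
    exact Finset.single_le_sum (f := fun i => δ i ^ (γ / σ i))
      (fun i _ => Real.rpow_nonneg (hδ i) _) (Finset.mem_univ i₀)

end Finite

theorem uniqueDiffOn_Icc_pi {ι : Type*} {a b : ι → ℝ} (hab : ∀ i, a i < b i) :
    UniqueDiffOn ℝ (Icc a b) := by
  rw [← pi_univ_Icc]
  exact UniqueDiffOn.pi fun i _ => uniqueDiffOn_Icc (hab i)

theorem exists_Icc_add_subset_of_abs_sub_le {ι : Type*} {a b x y r : ι → ℝ} (hx : x ∈ Icc a b)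
    (hy : y ∈ Icc a b) (hxy : ∀ i, |x i - y i| ≤ r i) (hrb : ∀ i, r i ≤ b i - a i) :
    ∃ c, Icc c (c + r) ⊆ Icc a b ∧ x ∈ Icc c (c + r) ∧ y ∈ Icc c (c + r) := by
  refine ⟨fun i => min (min (x i) (y i)) (b i - r i), Icc_subset_Icc (fun i => ?_) (fun i => ?_),
    ⟨fun i => ?_, fun i => ?_⟩, ⟨fun i => ?_, fun i => ?_⟩⟩ <;>
  · have := hx.1 i; have := hx.2 i; have := hy.1 i; have := hy.2 i; have := hrb i
    have := abs_sub_le_iff.1 (hxy i)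
    simp only [Pi.add_apply, le_min_iff, min_le_iff, ← sub_le_iff_le_add, ← le_sub_iff_add_le]
    grind

section PartialDeriv

variable {ι F : Type*} [Fintype ι] [DecidableEq ι] [NormedAddCommGroup F] [NormedSpace ℝ F]

noncomputable def partialDerivWithin (u : (ι → ℝ) → F) (S : Set (ι → ℝ)) (i : ι) :
    (ι → ℝ) → F :=
  fun z => fderivWithin ℝ u S z (Pi.single i 1)

theorem ContinuousLinearMap.enorm_apply_le_sum (L : (ι → ℝ) →L[ℝ] F) (v : ι → ℝ) :
    ‖L v‖ₑ ≤ ∑ i, ‖v i‖ₑ * ‖L (Pi.single i 1)‖ₑ := by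
  calc ‖L v‖ₑ = ‖∑ i, v i • L (Pi.single i 1)‖ₑ := by
        conv_lhs => rw [← Finset.univ_sum_single v]
        simp only [map_sum, ← L.map_smul, ← Pi.single_smul, smul_eq_mul, mul_one]
    _ ≤ ∑ i, ‖v i • L (Pi.single i 1)‖ₑ := enorm_sum_le _ _
    _ = ∑ i, ‖v i‖ₑ * ‖L (Pi.single i 1)‖ₑ := by simp only [enorm_smul]

variable {S : Set (ι → ℝ)} {u : (ι → ℝ) → F}

theorem ContDiffOn.continuousOn_partialDerivWithin (hu : ContDiffOn ℝ 1 u S)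
    (hS : UniqueDiffOn ℝ S) (i : ι) : ContinuousOn (partialDerivWithin u S i) S :=
  (hu.continuousOn_fderivWithin hS le_rfl).clm_apply continuousOn_const

theorem eLpNorm_partialDerivWithin_Icc_ne_top {a b : ι → ℝ} (hab : ∀ i, a i < b i)
    (hu : ContDiffOn ℝ 1 u (Icc a b)) (i : ι) (q : ℝ≥0∞) :
    eLpNorm (partialDerivWithin u (Icc a b) i) q (volume.restrict (Icc a b)) ≠ ⊤ :=
  (hu.continuousOn_partialDerivWithin (uniqueDiffOn_Icc_pi hab) i).eLpNorm_restrict_ne_top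
    isCompact_Icc q

theorem ContDiffOn.continuousOn_partialDerivWithin_homothety (hu : ContDiffOn ℝ 1 u S)
    (hS : UniqueDiffOn ℝ S) {R : Set (ι → ℝ)} (hRS : R ⊆ S) (hRc : Convex ℝ R) {x : ι → ℝ}
    (hx : x ∈ R) (i : ι) :
    ContinuousOn (fun q : (ι → ℝ) × ℝ => partialDerivWithin u S i (homothety x q.2 q.1))
      (R ×ˢ Icc 0 1) :=
  (hu.continuousOn_partialDerivWithin hS i).comp
    (by simp only [homothety_apply, vsub_eq_sub, vadd_eq_add]; fun_prop)
    fun q hq => hRS (hRc.mapsTo_homothety hx hq.2 hq.1)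

theorem ContDiffOn.aestronglyMeasurable_partialDerivWithin_comp_homothety
    (hu : ContDiffOn ℝ 1 u S) (hS : UniqueDiffOn ℝ S) {R : Set (ι → ℝ)} (hRS : R ⊆ S)
    (hRc : Convex ℝ R) (hRm : MeasurableSet R) {x : ι → ℝ} (hx : x ∈ R) (i : ι) {t : ℝ}
    (ht : t ∈ Icc (0 : ℝ) 1) :
    AEStronglyMeasurable (partialDerivWithin u S i ∘ homothety x t) (volume.restrict R) :=
  ((hu.continuousOn_partialDerivWithin_homothety hS hRS hRc hx i).comp
    (Continuous.prodMk_left t).continuousOn fun _ hz => ⟨hz, ht⟩).aestronglyMeasurable hRm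

variable [CompleteSpace F]

theorem enorm_sub_le_lintegral_sum_partialDerivWithin (hS : UniqueDiffOn ℝ S)
    (hu : ContDiffOn ℝ 1 u S) {x z : ι → ℝ} (hxz : segment ℝ x z ⊆ S) :
    ‖u z - u x‖ₑ ≤ ∫⁻ t in Ioc (0 : ℝ) 1,
      ∑ i, ‖z i - x i‖ₑ * ‖partialDerivWithin u S i (lineMap x z t)‖ₑ := by
  have hγ : MapsTo (lineMap x z) (Icc (0 : ℝ) 1) S := fun t ht =>
    hxz (lineMap_mem_segment ℝ x z ht)
  set D : ℝ → F := fun t => fderivWithin ℝ u S (lineMap x z t) (z - x)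
  have hD : ContinuousOn D (Icc 0 1) :=
    ((hu.continuousOn_fderivWithin hS le_rfl).comp lineMap_continuous.continuousOn hγ).clm_apply
      continuousOn_const
  have hderiv : ∀ t ∈ Icc (0 : ℝ) 1, HasDerivWithinAt (u ∘ lineMap x z) (D t) (Icc 0 1) t :=
    fun t ht => (hu.differentiableOn one_ne_zero _ (hγ ht)).hasFDerivWithinAt.comp_hasDerivWithinAt
      t hasDerivAt_lineMap.hasDerivWithinAt hγ
  have hftc : ∫ t in Ioc (0 : ℝ) 1, D t = u z - u x := by
    rw [← intervalIntegral.integral_of_le zero_le_one,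
      intervalIntegral.integral_eq_sub_of_hasDeriv_right_of_le zero_le_one
        (hu.continuousOn.comp lineMap_continuous.continuousOn hγ)
        (fun t ht => (hderiv t (Ioo_subset_Icc_self ht)).mono_of_mem_nhdsWithin
          (Icc_mem_nhdsGT_of_mem ⟨ht.1.le, ht.2⟩))
        (hD.intervalIntegrable_of_Icc zero_le_one)]
    simp
  calc ‖u z - u x‖ₑ = ‖∫ t in Ioc (0 : ℝ) 1, D t‖ₑ := by rw [hftc]
    _ ≤ ∫⁻ t in Ioc (0 : ℝ) 1, ‖D t‖ₑ := enorm_integral_le_lintegral_enorm _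
    _ ≤ _ := lintegral_mono fun t => ContinuousLinearMap.enorm_apply_le_sum _ _

theorem lintegral_enorm_sub_le_lintegral_sum_homothety (hS : UniqueDiffOn ℝ S)
    (hu : ContDiffOn ℝ 1 u S) {R : Set (ι → ℝ)} (hRS : R ⊆ S) (hRc : Convex ℝ R)
    (hRm : MeasurableSet R) {x : ι → ℝ} (hx : x ∈ R) {r : ι → ℝ}
    (hr : ∀ z ∈ R, ∀ i, |z i - x i| ≤ r i) :
    ∫⁻ z in R, ‖u z - u x‖ₑ ≤ ∫⁻ t in Ioc (0 : ℝ) 1,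
      ∑ i, ENNReal.ofReal (r i) * ∫⁻ z in R, ‖partialDerivWithin u S i (homothety x t z)‖ₑ := by
  have hmeas : ∀ i, AEMeasurable
      (fun q : (ι → ℝ) × ℝ => ‖partialDerivWithin u S i (homothety x q.2 q.1)‖ₑ)
      ((volume.restrict R).prod (volume.restrict (Ioc 0 1))) := fun i => by
    rw [Measure.prod_restrict]
    exact (((hu.continuousOn_partialDerivWithin_homothety hS hRS hRc hx i).mono
      (prod_mono_right Ioc_subset_Icc_self)).aestronglyMeasurable
        (hRm.prod measurableSet_Ioc)).enorm
  calc ∫⁻ z in R, ‖u z - u x‖ₑ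
      ≤ ∫⁻ z in R, ∫⁻ t in Ioc (0 : ℝ) 1,
          ∑ i, ENNReal.ofReal (r i) * ‖partialDerivWithin u S i (homothety x t z)‖ₑ := by
        refine setLIntegral_mono' hRm fun z hz =>
          (enorm_sub_le_lintegral_sum_partialDerivWithin hS hu
            ((hRc.segment_subset hx hz).trans hRS)).trans
          (lintegral_mono fun t => Finset.sum_le_sum fun i _ => ?_)
        rw [homothety_eq_lineMap, Real.enorm_eq_ofReal_abs]
        gcongr
        exact hr z hz i
    _ = _ := by
        rw [lintegral_lintegral_swap
          (Finset.aemeasurable_fun_sum _ fun i _ => (hmeas i).const_mul _)]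
        refine setLIntegral_congr_fun measurableSet_Ioc fun t ht => ?_
        rw [lintegral_finsetSum']
        · simp only [lintegral_const_mul' _ _ ENNReal.ofReal_ne_top]
        · exact fun i _ => (hu.aestronglyMeasurable_partialDerivWithin_comp_homothety hS hRS hRc
            hRm hx i (Ioc_subset_Icc_self ht)).enorm.const_mul _

theorem lintegral_enorm_sub_le_of_convex (hS : UniqueDiffOn ℝ S) (hu : ContDiffOn ℝ 1 u S)
    {R : Set (ι → ℝ)} (hRS : R ⊆ S) (hRc : Convex ℝ R) (hRm : MeasurableSet R) {x : ι → ℝ}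
    (hx : x ∈ R) {r : ι → ℝ} (hr : ∀ z ∈ R, ∀ i, |z i - x i| ≤ r i) {p : ι → ℝ}
    (hp : ∀ i, (Fintype.card ι : ℝ) < p i) :
    ∫⁻ z in R, ‖u z - u x‖ₑ ≤ ∑ i, ENNReal.ofReal (r i * (1 - Fintype.card ι / p i)⁻¹) *
      (eLpNorm (partialDerivWithin u S i) (ENNReal.ofReal (p i)) (volume.restrict S) *
        volume R ^ (1 - 1 / p i)) := by
  set N : ℝ := (Fintype.card ι : ℝ)
  set K : ι → ℝ≥0∞ := fun i => eLpNorm (partialDerivWithin u S i) (ENNReal.ofReal (p i))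
    (volume.restrict S) * volume R ^ (1 - 1 / p i)
  have hp₁ : ∀ i, 1 ≤ p i := fun i => by
    have : Nonempty ι := ⟨i⟩
    exact (Nat.one_le_cast.2 Fintype.card_pos).trans (hp i).le
  have hslice : ∀ i, ∀ t ∈ Ioc (0 : ℝ) 1, ∫⁻ z in R, ‖partialDerivWithin u S i (homothety x t z)‖ₑ
      ≤ ENNReal.ofReal (t ^ (-(N / p i))) * K i := fun i t ht => by
    have h := lintegral_enorm_comp_homothety_le volume (hp₁ i) hRm x ht.1
      (hRc.mapsTo_homothety hx (Ioc_subset_Icc_self ht))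
      (hu.aestronglyMeasurable_partialDerivWithin_comp_homothety hS hRS hRc hRm hx i
        (Ioc_subset_Icc_self ht))
    rw [finrank_fintype_fun_eq_card, mul_assoc] at h
    refine h.trans ?_
    simp only [K]
    gcongr
  calc ∫⁻ z in R, ‖u z - u x‖ₑ
      ≤ ∫⁻ t in Ioc (0 : ℝ) 1, ∑ i, ENNReal.ofReal (r i) *
          ∫⁻ z in R, ‖partialDerivWithin u S i (homothety x t z)‖ₑ :=
        lintegral_enorm_sub_le_lintegral_sum_homothety hS hu hRS hRc hRm hx hr
    _ ≤ ∫⁻ t in Ioc (0 : ℝ) 1, ∑ i, ENNReal.ofReal (r i) *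
          (ENNReal.ofReal (t ^ (-(N / p i))) * K i) := by
        refine setLIntegral_mono' measurableSet_Ioc fun t ht => ?_
        gcongr with i
        exact hslice i t ht
    _ = _ := by
        rw [lintegral_finsetSum _ fun i _ => by fun_prop]
        refine Finset.sum_congr rfl fun i _ => ?_
        rw [lintegral_const_mul _ (by fun_prop), lintegral_mul_const _ (by fun_prop),
          lintegral_Ioc_zero_one_ofReal_rpow, neg_add_eq_sub, ENNReal.ofReal_mul, mul_assoc]
        · exact (abs_nonneg _).trans (hr x hx i)
        · rw [neg_lt_neg_iff, div_lt_one (by linarith [hp₁ i])]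
          exact hp i

theorem enorm_sub_le_of_convex (hS : UniqueDiffOn ℝ S) (hu : ContDiffOn ℝ 1 u S)
    {R : Set (ι → ℝ)} (hRS : R ⊆ S) (hRc : Convex ℝ R) (hRm : MeasurableSet R)
    (hR₀ : volume R ≠ 0) (hRtop : volume R ≠ ⊤) {x y : ι → ℝ} (hx : x ∈ R) (hy : y ∈ R)
    {r : ι → ℝ} (hr : ∀ z ∈ R, ∀ w ∈ R, ∀ i, |z i - w i| ≤ r i) {p : ι → ℝ}
    (hp : ∀ i, (Fintype.card ι : ℝ) < p i) :
    ‖u x - u y‖ₑ ≤ 2 * ∑ i, ENNReal.ofReal (r i * (1 - Fintype.card ι / p i)⁻¹) *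
      (eLpNorm (partialDerivWithin u S i) (ENNReal.ofReal (p i)) (volume.restrict S) *
        volume R ^ (-(1 / p i))) := by
  have hmeas : ∀ v, AEMeasurable (fun z => ‖u z - v‖ₑ) (volume.restrict R) := fun v =>
    (((hu.continuousOn.mono hRS).sub continuousOn_const).aestronglyMeasurable hRm).enorm
  have hpow : ∀ i, volume R ^ (1 - 1 / p i) = volume R * volume R ^ (-(1 / p i)) := fun i => by
    rw [sub_eq_add_neg, ENNReal.rpow_add _ _ hR₀ hRtop, ENNReal.rpow_one]
  refine (ENNReal.mul_le_mul_iff_right hR₀ hRtop).1 ?_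
  calc volume R * ‖u x - u y‖ₑ = ∫⁻ _ in R, ‖u x - u y‖ₑ := by rw [setLIntegral_const, mul_comm]
    _ ≤ ∫⁻ z in R, (‖u z - u x‖ₑ + ‖u z - u y‖ₑ) := lintegral_mono fun z => by
        simpa only [edist_eq_enorm_sub] using edist_triangle_left (u x) (u y) (u z)
    _ = (∫⁻ z in R, ‖u z - u x‖ₑ) + ∫⁻ z in R, ‖u z - u y‖ₑ :=
        lintegral_add_left' (hmeas (u x)) fun z => ‖u z - u y‖ₑ
    _ ≤ 2 * ∑ i, ENNReal.ofReal (r i * (1 - Fintype.card ι / p i)⁻¹) *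
          (eLpNorm (partialDerivWithin u S i) (ENNReal.ofReal (p i)) (volume.restrict S) *
            volume R ^ (1 - 1 / p i)) := by
        rw [two_mul]
        exact add_le_add
          (lintegral_enorm_sub_le_of_convex hS hu hRS hRc hRm hx (fun z hz => hr z hz x hx) hp)
          (lintegral_enorm_sub_le_of_convex hS hu hRS hRc hRm hy (fun z hz => hr z hz y hy) hp)
    _ = _ := by
        simp only [Finset.mul_sum]
        refine Finset.sum_congr rfl fun i _ => ?_
        rw [hpow]
        ring

theorem norm_sub_le_of_mem_Icc_add (hS : UniqueDiffOn ℝ S) (hu : ContDiffOn ℝ 1 u S)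
    {p : ι → ℝ} (hp : ∀ i, (Fintype.card ι : ℝ) < p i)
    (hA : ∀ i, eLpNorm (partialDerivWithin u S i) (ENNReal.ofReal (p i)) (volume.restrict S) ≠ ⊤)
    {c r : ι → ℝ} (hr : ∀ i, 0 < r i) (hRS : Icc c (c + r) ⊆ S) {x y : ι → ℝ}
    (hx : x ∈ Icc c (c + r)) (hy : y ∈ Icc c (c + r)) :
    ‖u x - u y‖ ≤ 2 * ∑ i, r i * (1 - Fintype.card ι / p i)⁻¹ * (∏ j, r j) ^ (-(1 / p i)) *
      (eLpNorm (partialDerivWithin u S i) (ENNReal.ofReal (p i)) (volume.restrict S)).toReal := by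
  have hV : 0 < ∏ j, r j := Finset.prod_pos fun j _ => hr j
  have hvol : volume (Icc c (c + r)) = ENNReal.ofReal (∏ j, r j) := by
    rw [Real.volume_Icc_pi, ENNReal.ofReal_prod_of_nonneg fun j _ => (hr j).le]
    simp
  have hwidth : ∀ z ∈ Icc c (c + r), ∀ w ∈ Icc c (c + r), ∀ i, |z i - w i| ≤ r i :=
    fun z hz w hw i => by
      have := hz.1 i; have := hz.2 i; have := hw.1 i; have := hw.2 i
      simp only [Pi.add_apply] at *
      rw [abs_sub_le_iff]
      constructor <;> linarith
  have h := enorm_sub_le_of_convex hS hu hRS (convex_Icc c (c + r)) measurableSet_Icc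
    (by rw [hvol]; exact (ENNReal.ofReal_pos.2 hV).ne') (by rw [hvol]; exact ENNReal.ofReal_ne_top)
    hx hy hwidth hp
  rw [hvol] at h
  have hc : ∀ i, 0 ≤ r i * (1 - Fintype.card ι / p i)⁻¹ := fun i =>
    mul_nonneg (hr i).le (inv_one_sub_div_pos (Nat.cast_nonneg _) (hp i)).le
  have hterm : ∀ i, ENNReal.ofReal (r i * (1 - Fintype.card ι / p i)⁻¹) *
      (eLpNorm (partialDerivWithin u S i) (ENNReal.ofReal (p i)) (volume.restrict S) *
        ENNReal.ofReal (∏ j, r j) ^ (-(1 / p i))) ≠ ⊤ := fun i =>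
    ENNReal.mul_ne_top ENNReal.ofReal_ne_top (ENNReal.mul_ne_top (hA i)
      (ENNReal.rpow_ne_top_of_ne_zero (by simpa using hV) ENNReal.ofReal_ne_top))
  rw [← toReal_enorm]
  refine (ENNReal.toReal_mono ?_ h).trans_eq ?_
  · exact ENNReal.mul_ne_top ENNReal.ofNat_ne_top (ENNReal.sum_ne_top.2 fun i _ => hterm i)
  · rw [ENNReal.toReal_mul, ENNReal.toReal_sum fun i _ => hterm i]
    simp only [ENNReal.toReal_mul, ENNReal.toReal_ofReal (hc _), ← ENNReal.toReal_rpow,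
      ENNReal.toReal_ofReal hV.le, ENNReal.toReal_ofNat]
    congr 1
    exact Finset.sum_congr rfl fun i _ => by ring

variable {a b : ι → ℝ}

theorem exists_norm_sub_le_mul_rpow (hab : ∀ i, a i < b i) {p : ι → ℝ}
    (hp : ∀ i, (Fintype.card ι : ℝ) < p i) {σ : ι → ℝ} (hσ : ∑ i, σ i = 1) {γ : ℝ}
    (hσp : ∀ i, σ i - 1 / p i = γ) :
    ∃ K ≥ 0, ∀ u : (ι → ℝ) → F, ContDiffOn ℝ 1 u (Icc a b) →
      ∀ t > 0, (∀ i, t ^ σ i ≤ b i - a i) → ∀ x ∈ Icc a b, ∀ y ∈ Icc a b,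
        (∀ i, |x i - y i| ≤ t ^ σ i) →
          ‖u x - u y‖ ≤ K * (∑ i, (eLpNorm (partialDerivWithin u (Icc a b) i)
            (ENNReal.ofReal (p i)) (volume.restrict (Icc a b))).toReal) * t ^ γ := by
  have hc : ∀ i, 0 ≤ (1 - Fintype.card ι / p i)⁻¹ := fun i =>
    (inv_one_sub_div_pos (Nat.cast_nonneg _) (hp i)).le
  refine ⟨2 * ∑ i, (1 - Fintype.card ι / p i)⁻¹,
    mul_nonneg zero_le_two (Finset.sum_nonneg fun i _ => hc i),
    fun u hu t ht htb x hx y hy hxy => ?_⟩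
  obtain ⟨c, hsub, hxc, hyc⟩ := exists_Icc_add_subset_of_abs_sub_le hx hy hxy htb
  have hscale : ∀ i, t ^ σ i * (∏ j, t ^ σ j) ^ (-(1 / p i)) = t ^ γ := fun i => by
    rw [← Real.rpow_sum_of_pos ht, hσ, Real.rpow_one, ← hσp i, Real.rpow_sub ht,
      Real.rpow_neg ht.le]
    exact (div_eq_mul_inv _ _).symm
  calc ‖u x - u y‖
      ≤ 2 * ∑ i, t ^ σ i * (1 - Fintype.card ι / p i)⁻¹ * (∏ j, t ^ σ j) ^ (-(1 / p i)) *
          (eLpNorm (partialDerivWithin u (Icc a b) i) (ENNReal.ofReal (p i))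
            (volume.restrict (Icc a b))).toReal :=
        norm_sub_le_of_mem_Icc_add (uniqueDiffOn_Icc_pi hab) hu hp
          (fun i => eLpNorm_partialDerivWithin_Icc_ne_top hab hu i _)
          (fun i => Real.rpow_pos_of_pos ht _) hsub hxc hyc
    _ = 2 * (∑ i, (1 - Fintype.card ι / p i)⁻¹ * (eLpNorm (partialDerivWithin u (Icc a b) i)
          (ENNReal.ofReal (p i)) (volume.restrict (Icc a b))).toReal) * t ^ γ := by
        rw [mul_assoc, Finset.sum_mul]
        congr 1
        refine Finset.sum_congr rfl fun i _ => ?_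
        rw [← hscale i]
        ring
    _ ≤ _ := by
        refine (mul_le_mul_of_nonneg_right (mul_le_mul_of_nonneg_left
          (Finset.sum_mul_le_sum_mul_sum hc fun i => ENNReal.toReal_nonneg) zero_le_two)
          (Real.rpow_nonneg ht.le _)).trans_eq ?_
        ring

theorem exists_norm_sub_le_of_mem_Icc (hab : ∀ i, a i < b i) {p : ι → ℝ}
    (hp : ∀ i, (Fintype.card ι : ℝ) < p i) :
    ∃ K ≥ 0, ∀ u : (ι → ℝ) → F, ContDiffOn ℝ 1 u (Icc a b) → ∀ x ∈ Icc a b, ∀ y ∈ Icc a b,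
      ‖u x - u y‖ ≤ K * ∑ i, (eLpNorm (partialDerivWithin u (Icc a b) i) (ENNReal.ofReal (p i))
        (volume.restrict (Icc a b))).toReal := by
  have hba : ∀ i, 0 < (b - a) i := fun i => sub_pos.2 (hab i)
  set w : ι → ℝ := fun i =>
    (b - a) i * (1 - Fintype.card ι / p i)⁻¹ * (∏ j, (b - a) j) ^ (-(1 / p i))
  have hw : ∀ i, 0 ≤ w i := fun i =>
    mul_nonneg (mul_nonneg (hba i).le (inv_one_sub_div_pos (Nat.cast_nonneg _) (hp i)).le)
      (Real.rpow_nonneg (Finset.prod_nonneg fun j _ => (hba j).le) _)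
  refine ⟨2 * ∑ i, w i, mul_nonneg zero_le_two (Finset.sum_nonneg fun i _ => hw i),
    fun u hu x hx y hy => ?_⟩
  rw [← add_sub_cancel a b] at hx hy
  calc ‖u x - u y‖ ≤ 2 * ∑ i, w i * (eLpNorm (partialDerivWithin u (Icc a b) i)
        (ENNReal.ofReal (p i)) (volume.restrict (Icc a b))).toReal :=
      norm_sub_le_of_mem_Icc_add (uniqueDiffOn_Icc_pi hab) hu hp
        (fun i => eLpNorm_partialDerivWithin_Icc_ne_top hab hu i _) hba
        (by rw [add_sub_cancel]) hx hy
    _ ≤ _ := by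
        rw [mul_assoc]
        gcongr
        exact Finset.sum_mul_le_sum_mul_sum hw fun i => ENNReal.toReal_nonneg

theorem exists_norm_sub_le_mul_sum_rpow (hab : ∀ i, a i < b i) {p : ι → ℝ}
    (hp : ∀ i, (Fintype.card ι : ℝ) < p i) {σ : ι → ℝ} (hσ : ∀ i, 0 < σ i)
    (hσsum : ∑ i, σ i = 1) {γ : ℝ} (hγ : 0 ≤ γ) (hσp : ∀ i, σ i - 1 / p i = γ) :
    ∃ K, ∀ u : (ι → ℝ) → F, ContDiffOn ℝ 1 u (Icc a b) → ∀ x ∈ Icc a b, ∀ y ∈ Icc a b,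
      ‖u x - u y‖ ≤ K * (∑ i, (eLpNorm (partialDerivWithin u (Icc a b) i)
        (ENNReal.ofReal (p i)) (volume.restrict (Icc a b))).toReal) *
          ∑ i, |x i - y i| ^ (γ / σ i) := by
  obtain ⟨K₁, hK₁, hsmall⟩ := exists_norm_sub_le_mul_rpow (F := F) hab hp hσsum hσp
  obtain ⟨K₂, hK₂, hlarge⟩ := exists_norm_sub_le_of_mem_Icc (F := F) hab hp
  have hba : ∀ i, 0 < b i - a i := fun i => sub_pos.2 (hab i)
  set L := ∑ i, (b i - a i) ^ (-(γ / σ i))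
  have hL : 0 ≤ L := Finset.sum_nonneg fun i _ => Real.rpow_nonneg (hba i).le _
  refine ⟨K₁ + K₂ * L, fun u hu x hx y hy => ?_⟩
  set A := ∑ i, (eLpNorm (partialDerivWithin u (Icc a b) i) (ENNReal.ofReal (p i))
    (volume.restrict (Icc a b))).toReal
  have hA : 0 ≤ A := Finset.sum_nonneg fun i _ => ENNReal.toReal_nonneg
  rcases eq_or_ne x y with rfl | hxy
  · rw [sub_self, norm_zero]
    exact mul_nonneg (mul_nonneg (by positivity) hA)
      (Finset.sum_nonneg fun i _ => Real.rpow_nonneg (abs_nonneg _) _)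
  obtain ⟨j, hj⟩ := Function.ne_iff.1 hxy
  obtain ⟨t, ht, hxyt, htH⟩ := exists_pos_le_rpow_and_rpow_le_sum
    (fun i => abs_nonneg (x i - y i)) hσ γ (abs_pos.2 (sub_ne_zero.2 hj))
  by_cases hfit : ∀ i, t ^ σ i ≤ b i - a i
  · refine (hsmall u hu t ht hfit x hx y hy hxyt).trans ?_
    gcongr
    exact le_add_of_nonneg_right (mul_nonneg hK₂ hL)
  obtain ⟨i, hi⟩ : ∃ i, b i - a i < t ^ σ i := by simpa using hfit
  have hLH : 1 ≤ L * ∑ i, |x i - y i| ^ (γ / σ i) :=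
    calc (1 : ℝ) ≤ (b i - a i) ^ (-(γ / σ i)) * t ^ γ :=
          one_le_rpow_neg_mul_rpow_of_lt_rpow (hba i) (hσ i) hγ ht hi
      _ ≤ L * ∑ i, |x i - y i| ^ (γ / σ i) :=
          mul_le_mul (Finset.single_le_sum (f := fun i => (b i - a i) ^ (-(γ / σ i)))
            (fun i _ => Real.rpow_nonneg (hba i).le _) (Finset.mem_univ i)) htH
            (Real.rpow_nonneg ht.le _) hL
  calc ‖u x - u y‖ ≤ K₂ * A := hlarge u hu x hx y hy
    _ ≤ K₂ * A * (L * ∑ i, |x i - y i| ^ (γ / σ i)) :=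
        le_mul_of_one_le_right (mul_nonneg hK₂ hA) hLH
    _ = K₂ * L * A * ∑ i, |x i - y i| ^ (γ / σ i) := by ring
    _ ≤ _ := by
        gcongr
        exact le_add_of_nonneg_left hK₁

end PartialDeriv

theorem anisotropic_sobolev_holder_embedding_general
    (N : ℕ) (hN : 2 ≤ N) (a b : Fin N → ℝ) (hab : ∀ i, a i < b i)
    (p : Fin N → ℝ) (hp : ∀ i, (N : ℝ) < p i)
    (pM : ℝ)
    (β : Fin N → ℝ)
    (hβ : ∀ i, β i = (1 - ∑ j, 1 / p j) / (1 - ∑ j, 1 / p j + N / p i)) :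
    ∃ C > (0 : ℝ), ∀ u : (Fin N → ℝ) → ℝ,
      ContDiffOn ℝ 1 u (Set.Icc a b) →
      ∀ x ∈ Set.Icc a b, ∀ y ∈ Set.Icc a b,
        |u x - u y| ≤
          C * ((eLpNorm u (ENNReal.ofReal pM)
                (volume.restrict (Set.pi Set.univ fun i => Set.Ioo (a i) (b i)))).toReal
              + ∑ i, (eLpNorm
                  (fun z => fderivWithin ℝ u (Set.Icc a b) z (Pi.single i 1))
                  (ENNReal.ofReal (p i))
                  (volume.restrict (Set.pi Set.univ fun i => Set.Ioo (a i) (b i)))).toReal)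
            * ∑ i, |x i - y i| ^ β i := by
  have : Nonempty (Fin N) := ⟨⟨0, by omega⟩⟩
  have hN₀ : (0 : ℝ) < N := by exact_mod_cast Fin.pos'
  have hp₀ : ∀ i, 0 < p i := fun i => hN₀.trans (hp i)
  have hp' : ∀ i, (Fintype.card (Fin N) : ℝ) < p i := by simpa using hp
  set s := 1 - ∑ j, 1 / p j
  have hs : 0 < s := by linarith [sum_one_div_lt_one hp']
  set σ : Fin N → ℝ := fun i => s / N + 1 / p i
  have hσ : ∀ i, 0 < σ i := fun i => by have := hp₀ i; positivity
  have hσsum : ∑ i, σ i = 1 := by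
    simp only [σ, Finset.sum_add_distrib, Finset.sum_const, Finset.card_univ, Fintype.card_fin,
      nsmul_eq_mul, s]
    field_simp
    ring
  have hβσ : ∀ i, β i = s / N / σ i := fun i => by
    have := hp₀ i
    rw [hβ i]
    simp only [σ]
    field_simp
  obtain ⟨K, hK⟩ := exists_norm_sub_le_mul_sum_rpow (F := ℝ) hab hp' hσ
    hσsum (div_nonneg hs.le hN₀.le) fun i => by simp [σ]
  refine ⟨max K 1, by positivity, fun u hu x hx y hy => ?_⟩
  have hΩ : volume.restrict (pi univ fun i => Ioo (a i) (b i)) = volume.restrict (Icc a b) :=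
    Measure.restrict_congr_set Measure.univ_pi_Ioo_ae_eq_Icc
  rw [hΩ]
  simp_rw [hβσ, ← Real.norm_eq_abs]
  refine (hK u hu x hx y hy).trans ?_
  gcongr ?_ * ?_ * _
  · exact le_max_left _ _
  · exact le_add_of_nonneg_left ENNReal.toReal_nonneg

/-- Constant-exponent case of the main embedding theorem (Theorem 1.1):
the anisotropic Sobolev norm controls the anisotropic Hölder seminorm on a
rectangular domain `Ω = ∏ (a i, b i)`. -/
theorem anisotropic_sobolev_holder_embedding
    (N : ℕ) (hN : 2 ≤ N) (a b : Fin N → ℝ) (hab : ∀ i, a i < b i)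
    (p : Fin N → ℝ) (hp : ∀ i, (N : ℝ) < p i)
    (pM : ℝ) (hpM : IsGreatest (Set.range p) pM)
    (β : Fin N → ℝ)
    (hβ : ∀ i, β i = (1 - ∑ j, 1 / p j) / (1 - ∑ j, 1 / p j + N / p i)) :
    ∃ C > (0 : ℝ), ∀ u : (Fin N → ℝ) → ℝ,
      ContDiffOn ℝ 1 u (Set.Icc a b) →
      ∀ x ∈ Set.Icc a b, ∀ y ∈ Set.Icc a b,
        |u x - u y| ≤
          C * ((eLpNorm u (ENNReal.ofReal pM)
                (volume.restrict (Set.pi Set.univ fun i => Set.Ioo (a i) (b i)))).toReal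
              + ∑ i, (eLpNorm
                  (fun z => fderivWithin ℝ u (Set.Icc a b) z (Pi.single i 1))
                  (ENNReal.ofReal (p i))
                  (volume.restrict (Set.pi Set.univ fun i => Set.Ioo (a i) (b i)))).toReal)
            * ∑ i, |x i - y i| ^ β i :=
  anisotropic_sobolev_holder_embedding_general N hN a b hab p hp pM β hβ
end

section
/- Let Ω = {(x, y) ∈ ℝ² : x² < y < 2x² and 0 < x < 1}. Then the function u(x, y) = √x belongs to L⁴(Ω) and the function v(x, y) = 1/(2√x) (the partial derivative ∂_x u) belongs to L⁴(Ω), i.e., ∫_Ω x² d(x,y) < ∞ and ∫_Ω x^{−2}/16 d(x,y) < ∞, where integration is with respect to two-dimensional Lebesgue measure. -/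
/-!
Over `x ∈ (0, 1)` the cusp is the interval `(x², 2x²)`, of length `x²`, so the image of Lebesgue
measure on `Ω` under `(x, y) ↦ x` is `x² dx` on `(0, 1)`. All four claims are about functions of
`x` alone and reduce to this weighted measure: `u⁴ = x²` and `(∂ₓu)⁴ = x⁻²/16`, and the weight turns
them into `x⁴` and the constant `1/16`, both integrable on `(0, 1)`.
-/

open MeasureTheory Set

section RegionBetween

variable {α : Type*} [MeasurableSpace α] {μ : Measure α} [SFinite μ] {f g : α → ℝ} {s : Set α}

theorem map_fst_restrict_regionBetween (hf : AEMeasurable f (μ.restrict s))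
    (hg : AEMeasurable g (μ.restrict s)) (hs : MeasurableSet s) :
    ((μ.prod volume).restrict (regionBetween f g s)).map Prod.fst =
      (μ.restrict s).withDensity fun x => ENNReal.ofReal (g x - f x) := by
  ext t ht
  have hslice : Prod.fst ⁻¹' t ∩ regionBetween f g s = regionBetween f g (t ∩ s) := by
    ext p; simp [regionBetween, and_assoc]
  rw [Measure.map_apply measurable_fst ht, Measure.restrict_apply (measurable_fst ht), hslice,
    volume_regionBetween_eq_lintegral (hf.mono_set inter_subset_right)
      (hg.mono_set inter_subset_right) (ht.inter hs),
    withDensity_apply _ ht, Measure.restrict_restrict ht]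
  rfl

end RegionBetween

theorem memLp_of_integrable_norm_rpow_eq {α E : Type*} [MeasurableSpace α] {μ : Measure α}
    [NormedAddCommGroup E] {F : α → E} {G : α → ℝ} {p : ENNReal} (hp0 : p ≠ 0) (hp : p ≠ ⊤)
    (hF : AEStronglyMeasurable F μ) (hG : Integrable G μ)
    (hFG : ∀ᵐ x ∂μ, ‖F x‖ ^ p.toReal = G x) : MemLp F p μ :=
  (integrable_norm_rpow_iff hF hp0 hp).1 (hG.congr (hFG.mono fun _ h => h.symm))

theorem Real.sqrt_pow_four {x : ℝ} (hx : 0 ≤ x) : √x ^ 4 = x ^ 2 := by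
  rw [show 4 = 2 * 2 by rfl, pow_mul, Real.sq_sqrt hx]

noncomputable section Cusp

def cuspDomain : Set (ℝ × ℝ) := regionBetween (fun x => x ^ 2) (fun x => 2 * x ^ 2) (Ioo 0 1)

def cuspMarginal : Measure ℝ :=
  (volume.restrict (Ioo 0 1)).withDensity fun x => ENNReal.ofReal (x ^ 2)

theorem map_fst_restrict_cuspDomain :
    (volume.restrict cuspDomain).map Prod.fst = cuspMarginal := by
  rw [cuspDomain, Measure.volume_eq_prod, map_fst_restrict_regionBetween (by fun_prop)
    (by fun_prop) measurableSet_Ioo, cuspMarginal]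
  congr 2 with x
  ring_nf

theorem integrable_cuspMarginal_iff {F : ℝ → ℝ} :
    Integrable F cuspMarginal ↔ IntegrableOn (fun x => x ^ 2 * F x) (Ioo 0 1) := by
  rw [cuspMarginal, integrable_withDensity_iff (by fun_prop) (by simp)]
  simp only [ENNReal.toReal_ofReal (sq_nonneg _), mul_comm, IntegrableOn]

theorem ae_mem_Ioo_cuspMarginal : ∀ᵐ x ∂cuspMarginal, x ∈ Ioo (0 : ℝ) 1 :=
  withDensity_absolutelyContinuous _ _ (ae_restrict_mem measurableSet_Ioo)

theorem integrable_sq_cuspMarginal : Integrable (· ^ 2) cuspMarginal := by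
  rw [integrable_cuspMarginal_iff]
  exact (by fun_prop : Continuous fun x : ℝ => x ^ 2 * x ^ 2).integrableOn_Icc.mono_set
    Ioo_subset_Icc_self

theorem integrable_inv_sq_div_cuspMarginal :
    Integrable (fun x => x⁻¹ ^ 2 / 16) cuspMarginal := by
  rw [integrable_cuspMarginal_iff]
  refine (integrableOn_const (C := (1 / 16 : ℝ)) (by simp)).congr_fun (fun x hx => ?_)
    measurableSet_Ioo
  have : x ≠ 0 := hx.1.ne'
  field_simp

theorem memLp_sqrt_cuspMarginal : MemLp Real.sqrt 4 cuspMarginal := by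
  refine memLp_of_integrable_norm_rpow_eq (by norm_num) (by norm_num) (by fun_prop)
    integrable_sq_cuspMarginal (ae_mem_Ioo_cuspMarginal.mono fun x hx => ?_)
  rw [Real.norm_of_nonneg (Real.sqrt_nonneg x), ENNReal.toReal_ofNat, Real.rpow_ofNat,
    Real.sqrt_pow_four hx.1.le]

theorem memLp_inv_two_mul_sqrt_cuspMarginal :
    MemLp (fun x => 1 / (2 * √x)) 4 cuspMarginal := by
  refine memLp_of_integrable_norm_rpow_eq (by norm_num) (by norm_num)
    (by fun_prop : Measurable fun x => 1 / (2 * √x)).aestronglyMeasurable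
    integrable_inv_sq_div_cuspMarginal (ae_mem_Ioo_cuspMarginal.mono fun x hx => ?_)
  rw [Real.norm_of_nonneg (by positivity), ENNReal.toReal_ofNat, Real.rpow_ofNat, div_pow,
    mul_pow, Real.sqrt_pow_four hx.1.le]
  ring

end Cusp

/-- The integrability claim from Counterexample 1 (Section 4): on the cusp
domain `Ω = {(x,y) : x² < y < 2x², 0 < x < 1}`, both `u(x,y) = √x` and its
partial derivative `∂ₓu(x,y) = 1/(2√x)` belong to `L⁴(Ω)`; equivalently,
`∫_Ω x² < ∞` and `∫_Ω x⁻²/16 < ∞`. -/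
theorem cusp_domain_L4_membership :
    let Ω : Set (ℝ × ℝ) :=
      {q : ℝ × ℝ | q.1 ^ 2 < q.2 ∧ q.2 < 2 * q.1 ^ 2 ∧ 0 < q.1 ∧ q.1 < 1}
    MemLp (fun q : ℝ × ℝ => Real.sqrt q.1) 4 (volume.restrict Ω) ∧
    MemLp (fun q : ℝ × ℝ => 1 / (2 * Real.sqrt q.1)) 4 (volume.restrict Ω) ∧
    IntegrableOn (fun q : ℝ × ℝ => q.1 ^ 2) Ω volume ∧
    IntegrableOn (fun q : ℝ × ℝ => (q.1)⁻¹ ^ 2 / 16) Ω volume := by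
  intro Ω
  have hΩ : Ω = cuspDomain := by
    ext q
    simp only [Ω, cuspDomain, regionBetween, mem_ofPred_eq, mem_Ioo]
    tauto
  have hmap := map_fst_restrict_cuspDomain
  rw [hΩ]
  refine ⟨?_, ?_, ?_, ?_⟩
  · exact (hmap ▸ memLp_sqrt_cuspMarginal).comp_of_map measurable_fst.aemeasurable
  · exact (hmap ▸ memLp_inv_two_mul_sqrt_cuspMarginal).comp_of_map measurable_fst.aemeasurable
  · exact (hmap ▸ integrable_sq_cuspMarginal).comp_measurable measurable_fst
  · exact (hmap ▸ integrable_inv_sq_div_cuspMarginal).comp_measurable measurable_fst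
end
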